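/- Let Ω ⊂ ℝ^d be open bounded with Lipschitz boundary, K(x) compact convex with B(0,α) ⊆ K(x) ⊆ B(0,M) and Hausdorff-continuous in x, φ⁰ the support function and d the induced Finsler distance. If u ∈ C(Ω) satisfies u(y) − u(x) ≤ d(x,y) for all x, y ∈ Ω, then u is locally Lipschitz, hence a.e. differentiable, and ∇u(x) ∈ K(x) for a.e. x ∈ Ω. -/

import Mathlib

/-!
Along a unit-speed straight segment `s ↦ x + s • e`, the Finsler length is at most
`∫ φ⁰(x + s • e, e) ds`, and `φ⁰ ≤ M` on unit vectors; so `u` is `M`-Lipschitz on every ball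
in `Ω`, and Rademacher's theorem makes it differentiable a.e. At a point `x` of
differentiability, Hausdorff continuity of `K` makes `φ⁰(·, e)` upper semicontinuous, so the
segment from `x` to `x + t • e` has length at most `(φ⁰(x, e) + ε) t` for small `t > 0`, whence
`⟪∇u(x), e⟫ ≤ φ⁰(x, e)`. A closed convex set is the intersection of the half-spaces
`{p | ⟪p, q⟫ ≤ φ⁰(x, q)}` (Hahn–Banach), so `∇u(x) ∈ K(x)`.
-/

open Metric Set Filter MeasureTheory
open scoped RealInnerProductSpace

/-- The Finsler pseudo-distance associated to a metric `φ` on a domain `Ω`. -/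
noncomputable def finslerDist {n : ℕ} (Ω : Set (EuclideanSpace ℝ (Fin n)))
    (φ : EuclideanSpace ℝ (Fin n) → EuclideanSpace ℝ (Fin n) → ℝ)
    (x y : EuclideanSpace ℝ (Fin n)) : ℝ :=
  sInf {r : ℝ | ∃ L : ℝ, 0 ≤ L ∧ ∃ γ γ' : ℝ → EuclideanSpace ℝ (Fin n),
    LipschitzOnWith 1 γ (Set.Icc 0 L) ∧ (∀ t ∈ Set.Icc 0 L, γ t ∈ Ω) ∧
    γ 0 = x ∧ γ L = y ∧
    (∀ᵐ s ∂(volume : Measure ℝ), s ∈ Set.Ioo 0 L →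
      HasDerivAt γ (γ' s) s ∧ ‖γ' s‖ = 1) ∧
    r = ∫ s in (0:ℝ)..L, φ (γ s) (γ' s)}

/-- The support function `φ⁰(x, q) = sup {⟪p, q⟫ : p ∈ K x}`. -/
noncomputable def suppFn {n : ℕ}
    (K : EuclideanSpace ℝ (Fin n) → Set (EuclideanSpace ℝ (Fin n)))
    (x q : EuclideanSpace ℝ (Fin n)) : ℝ :=
  sSup ((fun p => ⟪p, q⟫) '' K x)

open scoped Topology Pointwise

theorem LocallyLipschitzOn.ae_differentiableAt {E F : Type*}
    [NormedAddCommGroup E] [NormedSpace ℝ E] [FiniteDimensional ℝ E]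
    [MeasurableSpace E] [BorelSpace E] [NormedAddCommGroup F] [NormedSpace ℝ F]
    [FiniteDimensional ℝ F] (μ : Measure E) [μ.IsAddHaarMeasure] {s : Set E} {f : E → F}
    (hs : IsOpen s) (hf : LocallyLipschitzOn s f) :
    ∀ᵐ x ∂μ, x ∈ s → DifferentiableAt ℝ f x := by
  have hloc : ∀ x ∈ s, ∃ t ∈ 𝓝 x, IsOpen t ∧ ∃ C, LipschitzOnWith C f t := fun x hx => by
    obtain ⟨C, t, ht, hC⟩ := hf hx
    rw [hs.nhdsWithin_eq hx] at ht
    exact ⟨interior t, interior_mem_nhds.2 ht, isOpen_interior, C, hC.mono interior_subset⟩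
  choose! t ht_nhds ht_open C hC using hloc
  obtain ⟨T, hTs, hTc, hcover⟩ := TopologicalSpace.countable_cover_nhdsWithin
    fun x hx => mem_nhdsWithin_of_mem_nhds (ht_nhds x hx)
  have hT : ∀ x ∈ T, ∀ᵐ y ∂μ, y ∈ t x → DifferentiableAt ℝ f y := fun x hx => by
    filter_upwards [(hC x (hTs hx)).ae_differentiableWithinAt_of_mem] with y hy hyt
    exact (hy hyt).differentiableAt ((ht_open x (hTs hx)).mem_nhds hyt)
  filter_upwards [(ae_ball_iff hTc).2 hT] with y hy hys
  obtain ⟨x, hxT, hyx⟩ := mem_iUnion₂.1 (hcover hys)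
  exact hy x hxT hyx

theorem fderiv_apply_le_of_eventually_sub_le {F : Type*} [NormedAddCommGroup F]
    [NormedSpace ℝ F] {f : F → ℝ} {x v : F} {a : ℝ} (hf : DifferentiableAt ℝ f x)
    (h : ∀ c > a, ∀ᶠ t in 𝓝[>] 0, f (x + t • v) - f x ≤ c * t) :
    fderiv ℝ f x v ≤ a := by
  have hline : HasDerivAt (fun t : ℝ => f (x + t • v)) (fderiv ℝ f x v) 0 := by
    have hpath : HasDerivAt (fun t : ℝ => x + t • v) v 0 :=
      ((hasDerivAt_id 0).smul_const v).const_add x |>.congr_deriv (one_smul ℝ v)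
    have hfx : HasFDerivAt f (fderiv ℝ f x) (x + (0 : ℝ) • v) := by simpa using hf.hasFDerivAt
    exact hfx.comp_hasDerivAt 0 hpath
  have hslope : Tendsto (slope (fun t : ℝ => f (x + t • v)) 0) (𝓝[>] 0)
      (𝓝 (fderiv ℝ f x v)) :=
    (hasDerivAt_iff_tendsto_slope.1 hline).mono_left (nhdsWithin_mono 0 fun _ ht => ne_of_gt ht)
  refine le_of_forall_gt_imp_ge_of_dense fun c hc => le_of_tendsto hslope ?_
  filter_upwards [h c hc, self_mem_nhdsWithin] with t ht (htpos : 0 < t)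
  rw [slope_def_field, zero_smul, add_zero, sub_zero, div_le_iff₀ htpos]
  exact ht

section SupportFunction

variable {n : ℕ} {K : EuclideanSpace ℝ (Fin n) → Set (EuclideanSpace ℝ (Fin n))}
  {x y p q : EuclideanSpace ℝ (Fin n)}

theorem le_suppFn (hK : IsCompact (K x)) (hp : p ∈ K x) : ⟪p, q⟫ ≤ suppFn K x q :=
  le_csSup (hK.image (continuous_id.inner continuous_const)).bddAbove ⟨p, hp, rfl⟩

theorem suppFn_le {c : ℝ} (hK : (K x).Nonempty) (h : ∀ p ∈ K x, ⟪p, q⟫ ≤ c) :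
    suppFn K x q ≤ c :=
  csSup_le (hK.image _) (forall_mem_image.2 h)

theorem suppFn_nonneg (hK : IsCompact (K x)) (h0 : 0 ∈ K x) : 0 ≤ suppFn K x q := by
  simpa using le_suppFn (q := q) hK h0

theorem suppFn_le_mul_norm {M : ℝ} (hK : (K x).Nonempty) (hKM : K x ⊆ closedBall 0 M) :
    suppFn K x q ≤ M * ‖q‖ :=
  suppFn_le hK fun p hp => (real_inner_le_norm p q).trans <|
    mul_le_mul_of_nonneg_right (mem_closedBall_zero_iff.1 (hKM hp)) (norm_nonneg q)

theorem suppFn_smul {c : ℝ} (hc : 0 ≤ c) : suppFn K x (c • q) = c * suppFn K x q := by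
  have himage : (fun p => ⟪p, c • q⟫) '' K x = c • (fun p => ⟪p, q⟫) '' K x := by
    simp only [real_inner_smul_right, ← image_smul, image_image, smul_eq_mul]
  rw [suppFn, himage, Real.sSup_smul_of_nonneg hc, smul_eq_mul, suppFn]

theorem suppFn_le_suppFn_add_hausdorffDist (hKy : IsCompact (K y)) (hKx : IsCompact (K x))
    (hy : (K y).Nonempty) (hx : (K x).Nonempty) :
    suppFn K y q ≤ suppFn K x q + hausdorffDist (K y) (K x) * ‖q‖ := by
  refine suppFn_le hy fun p hp => ?_
  obtain ⟨p', hp', hpp'⟩ := hKx.exists_infDist_eq_dist hx p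
  have hdist : ‖p - p'‖ ≤ hausdorffDist (K y) (K x) := by
    rw [← dist_eq_norm, ← hpp']
    exact infDist_le_hausdorffDist_of_mem hp
      (hausdorffEDist_ne_top_of_nonempty_of_bounded hy hx hKy.isBounded hKx.isBounded)
  calc ⟪p, q⟫ = ⟪p', q⟫ + ⟪p - p', q⟫ := by rw [← inner_add_left, add_sub_cancel]
    _ ≤ suppFn K x q + ‖p - p'‖ * ‖q‖ := add_le_add (le_suppFn hKx hp') (real_inner_le_norm _ _)
    _ ≤ suppFn K x q + hausdorffDist (K y) (K x) * ‖q‖ := by gcongr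

theorem upperSemicontinuousWithinAt_suppFn {s : Set (EuclideanSpace ℝ (Fin n))}
    (hKc : ∀ y ∈ s, IsCompact (K y)) (hKne : ∀ y ∈ s, (K y).Nonempty) (hx : x ∈ s)
    (hcont : Tendsto (fun y => hausdorffDist (K y) (K x)) (𝓝[s] x) (𝓝 0)) :
    UpperSemicontinuousWithinAt (fun y => suppFn K y q) s x := by
  intro c hc
  have hlim : Tendsto (fun y => hausdorffDist (K y) (K x) * ‖q‖) (𝓝[s] x) (𝓝 0) := by
    simpa using hcont.mul_const ‖q‖
  have hsmall := hlim.eventually_lt_const (sub_pos.2 hc)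
  filter_upwards [hsmall, self_mem_nhdsWithin] with y hy hys
  have hbound := suppFn_le_suppFn_add_hausdorffDist (q := q) (hKc y hys) (hKc x hx) (hKne y hys)
    (hKne x hx)
  linarith

theorem mem_of_forall_inner_le_suppFn (hK : IsClosed (K x)) (hconv : Convex ℝ (K x))
    (hne : (K x).Nonempty) (h : ∀ q, ⟪p, q⟫ ≤ suppFn K x q) : p ∈ K x := by
  by_contra hp
  obtain ⟨f, t, hft, htp⟩ := geometric_hahn_banach_closed_point hconv hK hp
  set q := (InnerProductSpace.toDual ℝ (EuclideanSpace ℝ (Fin n))).symm f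
  have hfq : ∀ z, f z = ⟪z, q⟫ := fun z => by
    rw [real_inner_comm, InnerProductSpace.toDual_symm_apply]
  have hsupp : suppFn K x q ≤ t := suppFn_le hne fun z hz => hfq z ▸ (hft z hz).le
  linarith [h q, hfq p]

end SupportFunction

section FinslerDist

variable {n : ℕ} {Ω : Set (EuclideanSpace ℝ (Fin n))}
  {φ : EuclideanSpace ℝ (Fin n) → EuclideanSpace ℝ (Fin n) → ℝ} {x e : EuclideanSpace ℝ (Fin n)}

theorem finslerDist_add_smul_le (hφ : ∀ y ∈ Ω, ∀ q, 0 ≤ φ y q) (he : ‖e‖ = 1) {L c : ℝ}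
    (hL : 0 ≤ L) (hseg : ∀ s ∈ Icc 0 L, x + s • e ∈ Ω)
    (hc : ∀ s ∈ Icc 0 L, φ (x + s • e) e ≤ c) :
    finslerDist Ω φ x (x + L • e) ≤ c * L := by
  have hline : LipschitzWith 1 (fun s : ℝ => x + s • e) :=
    LipschitzWith.of_dist_le_mul fun s t => by
      simp [dist_eq_norm, ← sub_smul, norm_smul, he]
  have hint_le : ∫ s in (0:ℝ)..L, φ (x + s • e) e ≤ c * L := by
    by_cases hint : IntervalIntegrable (fun s => φ (x + s • e) e) volume 0 L
    · calc ∫ s in (0:ℝ)..L, φ (x + s • e) e ≤ ∫ _ in (0:ℝ)..L, c :=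
            intervalIntegral.integral_mono_on hL hint intervalIntegrable_const hc
        _ = c * L := by simp [mul_comm]
    · -- the integral is then `0` by convention, while `c ≥ φ x e ≥ 0`
      have hc0 : 0 ≤ c := (hφ x (by simpa using hseg 0 ⟨le_rfl, hL⟩) e).trans
        (by simpa using hc 0 ⟨le_rfl, hL⟩)
      rw [intervalIntegral.integral_undef hint]
      positivity
  rw [finslerDist]
  refine le_trans (csInf_le ?_ ?_) hint_le
  · refine ⟨0, ?_⟩
    rintro r ⟨ℓ, hℓ, γ, γ', -, hγΩ, -, -, -, rfl⟩
    exact intervalIntegral.integral_nonneg hℓ fun s hs => hφ _ (hγΩ s hs) _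
  · refine ⟨L, hL, fun s => x + s • e, fun _ => e, hline.lipschitzOnWith, hseg, by simp, rfl,
      ae_of_all _ fun s _ => ⟨?_, he⟩, rfl⟩
    simpa using ((hasDerivAt_id s).smul_const e).const_add x

theorem lipschitzOnWith_of_sub_le_finslerDist {B : Set (EuclideanSpace ℝ (Fin n))}
    {u : EuclideanSpace ℝ (Fin n) → ℝ} {C : NNReal} (hB : Convex ℝ B) (hBΩ : B ⊆ Ω)
    (hφ : ∀ y ∈ Ω, ∀ q, 0 ≤ φ y q) (hφC : ∀ y ∈ Ω, ∀ q, ‖q‖ = 1 → φ y q ≤ C)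
    (hu : ∀ y ∈ Ω, ∀ z ∈ Ω, u z - u y ≤ finslerDist Ω φ y z) :
    LipschitzOnWith C u B := by
  have hone_sided : ∀ y ∈ B, ∀ z ∈ B, u z - u y ≤ C * dist z y := by
    intro y hy z hz
    rcases eq_or_ne z y with rfl | hzy
    · simp
    have hnorm : 0 < ‖z - y‖ := norm_pos_iff.2 (sub_ne_zero.2 hzy)
    set e := ‖z - y‖⁻¹ • (z - y)
    have he : ‖e‖ = 1 := by simpa using norm_smul_inv_norm (𝕜 := ℝ) (sub_ne_zero.2 hzy)
    have hseg : ∀ s ∈ Icc 0 ‖z - y‖, y + s • e ∈ B := fun s hs => by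
      rw [smul_smul]
      refine hB.add_smul_sub_mem hy hz ⟨mul_nonneg hs.1 (inv_nonneg.2 hnorm.le), ?_⟩
      rw [mul_inv_le_iff₀ hnorm, one_mul]
      exact hs.2
    have hz_eq : y + ‖z - y‖ • e = z := by
      rw [smul_inv_smul₀ hnorm.ne', add_sub_cancel]
    have hd := finslerDist_add_smul_le hφ he hnorm.le (fun s hs => hBΩ (hseg s hs))
      fun s hs => hφC _ (hBΩ (hseg s hs)) e he
    rw [hz_eq, ← dist_eq_norm] at hd
    linarith [hu y (hBΩ hy) z (hBΩ hz)]
  refine LipschitzOnWith.of_dist_le_mul fun y hy z hz => ?_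
  rw [Real.dist_eq, abs_sub_le_iff]
  exact ⟨hone_sided z hz y hy, dist_comm z y ▸ hone_sided y hy z hz⟩

theorem eventually_finslerDist_add_smul_le (hΩ : IsOpen Ω) (hφ : ∀ y ∈ Ω, ∀ q, 0 ≤ φ y q)
    (hx : x ∈ Ω) (he : ‖e‖ = 1) (hφx : UpperSemicontinuousWithinAt (fun y => φ y e) Ω x)
    {c : ℝ} (hc : φ x e < c) :
    ∀ᶠ t in 𝓝[>] 0, x + t • e ∈ Ω ∧ finslerDist Ω φ x (x + t • e) ≤ c * t := by
  have hnhds : Ω ∩ {y | φ y e < c} ∈ 𝓝 x := by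
    have := hφx c hc
    rw [hΩ.nhdsWithin_eq hx] at this
    exact inter_mem (hΩ.mem_nhds hx) this
  obtain ⟨ρ, hρ, hball⟩ := Metric.mem_nhds_iff.1 hnhds
  have hseg : ∀ t < ρ, ∀ s ∈ Icc 0 t, x + s • e ∈ Ω ∩ {y | φ y e < c} := fun t ht s hs =>
    hball <| by simpa [norm_smul, he, abs_of_nonneg hs.1] using hs.2.trans_lt ht
  filter_upwards [Ioo_mem_nhdsGT hρ] with t ht
  exact ⟨(hseg t ht.2 t ⟨ht.1.le, le_rfl⟩).1, finslerDist_add_smul_le hφ he ht.1.le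
    (fun s hs => (hseg t ht.2 s hs).1) fun s hs => (hseg t ht.2 s hs).2.le⟩

theorem fderiv_apply_le_of_sub_le_finslerDist (hΩ : IsOpen Ω)
    (hφ : ∀ y ∈ Ω, ∀ q, 0 ≤ φ y q) (hx : x ∈ Ω) (he : ‖e‖ = 1)
    (hφx : UpperSemicontinuousWithinAt (fun y => φ y e) Ω x) {u : EuclideanSpace ℝ (Fin n) → ℝ}
    (hu : ∀ y ∈ Ω, u y - u x ≤ finslerDist Ω φ x y) (hd : DifferentiableAt ℝ u x) :
    fderiv ℝ u x e ≤ φ x e :=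
  fderiv_apply_le_of_eventually_sub_le hd fun _ hc =>
    (eventually_finslerDist_add_smul_le hΩ hφ hx he hφx hc).mono fun _ ht =>
      (hu _ ht.1).trans ht.2

end FinslerDist

theorem gradient_mem_of_sub_le_finslerDist {n : ℕ} {Ω : Set (EuclideanSpace ℝ (Fin n))}
    {K : EuclideanSpace ℝ (Fin n) → Set (EuclideanSpace ℝ (Fin n))}
    {u : EuclideanSpace ℝ (Fin n) → ℝ} {x : EuclideanSpace ℝ (Fin n)} (hΩ : IsOpen Ω)
    (hx : x ∈ Ω) (hKx : IsClosed (K x)) (hKconv : Convex ℝ (K x)) (hKne : (K x).Nonempty)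
    (hφ : ∀ y ∈ Ω, ∀ q, 0 ≤ suppFn K y q)
    (hKusc : ∀ q, UpperSemicontinuousWithinAt (fun y => suppFn K y q) Ω x)
    (hu : ∀ y ∈ Ω, u y - u x ≤ finslerDist Ω (suppFn K) x y) (hd : DifferentiableAt ℝ u x) :
    gradient u x ∈ K x := by
  refine mem_of_forall_inner_le_suppFn hKx hKconv hKne fun q => ?_
  rcases eq_or_ne q 0 with rfl | hq
  · simpa using hφ x hx 0
  set e := ‖q‖⁻¹ • q
  have he : ‖e‖ = 1 := by simpa using norm_smul_inv_norm (𝕜 := ℝ) hq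
  have hqe : ‖q‖ • e = q := smul_inv_smul₀ (norm_ne_zero_iff.2 hq) q
  calc ⟪gradient u x, q⟫ = fderiv ℝ u x q := by
        rw [← InnerProductSpace.toDual_apply_apply, toDual_gradient]
    _ = ‖q‖ * fderiv ℝ u x e := by rw [← smul_eq_mul, ← map_smul, hqe]
    _ ≤ ‖q‖ * suppFn K x e := by
        gcongr
        exact fderiv_apply_le_of_sub_le_finslerDist hΩ hφ hx he (hKusc e) hu hd
    _ = suppFn K x q := by rw [← suppFn_smul (norm_nonneg q), hqe]

theorem gradient_in_K_of_one_lipschitz_wrt_finslerDist_general {n : ℕ}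
    (Ω : Set (EuclideanSpace ℝ (Fin n)))
    (hΩo : IsOpen Ω)
    (K : EuclideanSpace ℝ (Fin n) → Set (EuclideanSpace ℝ (Fin n)))
    (α M : ℝ) (hα : 0 < α)
    (hKcomp : ∀ x ∈ closure Ω, IsCompact (K x))
    (hKconv : ∀ x ∈ closure Ω, Convex ℝ (K x))
    (hKin : ∀ x ∈ closure Ω, Metric.closedBall (0 : EuclideanSpace ℝ (Fin n)) α ⊆ K x)
    (hKout : ∀ x ∈ closure Ω, K x ⊆ Metric.closedBall (0 : EuclideanSpace ℝ (Fin n)) M)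
    (hKcont : ∀ x ∈ closure Ω, Tendsto (fun y => Metric.hausdorffDist (K y) (K x))
      (nhdsWithin x (closure Ω)) (nhds 0))
    (u : EuclideanSpace ℝ (Fin n) → ℝ)
    (hlip : ∀ x ∈ Ω, ∀ y ∈ Ω, u y - u x ≤ finslerDist Ω (suppFn K) x y) :
    (∀ x ∈ Ω, ∃ ε > 0, ∃ C : NNReal, LipschitzOnWith C u (Metric.ball x ε)) ∧
    (∀ᵐ x ∂(volume : Measure (EuclideanSpace ℝ (Fin n))), x ∈ Ω →
      DifferentiableAt ℝ u x ∧ gradient u x ∈ K x) := by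
  have hKne : ∀ y ∈ closure Ω, (K y).Nonempty := fun y hy =>
    ⟨0, hKin y hy (mem_closedBall_self hα.le)⟩
  have hφ : ∀ y ∈ Ω, ∀ q, 0 ≤ suppFn K y q := fun y hy _ =>
    suppFn_nonneg (hKcomp y (subset_closure hy)) (hKin y (subset_closure hy)
      (mem_closedBall_self hα.le))
  have hloc : ∀ x ∈ Ω, ∃ ε > 0, ∃ C : NNReal, LipschitzOnWith C u (ball x ε) := by
    intro x hx
    obtain ⟨ε, hε, hball⟩ := Metric.isOpen_iff.1 hΩo x hx
    refine ⟨ε, hε, M.toNNReal, lipschitzOnWith_of_sub_le_finslerDist (convex_ball x ε) hball hφ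
      (fun y hy q hq => ?_) hlip⟩
    calc suppFn K y q ≤ M * ‖q‖ :=
          suppFn_le_mul_norm (hKne y (subset_closure hy)) (hKout y (subset_closure hy))
      _ ≤ M.toNNReal := by rw [hq, mul_one]; exact Real.le_coe_toNNReal M
  have hLL : LocallyLipschitzOn Ω u := fun x hx =>
    let ⟨ε, hε, C, hC⟩ := hloc x hx
    ⟨C, ball x ε, mem_nhdsWithin_of_mem_nhds (ball_mem_nhds x hε), hC⟩
  refine ⟨hloc, ?_⟩
  filter_upwards [hLL.ae_differentiableAt volume hΩo] with x hd hx
  have hKusc : ∀ q, UpperSemicontinuousWithinAt (fun y => suppFn K y q) Ω x := fun q =>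
    (upperSemicontinuousWithinAt_suppFn hKcomp hKne (subset_closure hx)
      (hKcont x (subset_closure hx))).mono subset_closure
  exact ⟨hd hx, gradient_mem_of_sub_le_finslerDist hΩo hx (hKcomp x (subset_closure hx)).isClosed
    (hKconv x (subset_closure hx)) (hKne x (subset_closure hx)) hφ hKusc (hlip x hx) (hd hx)⟩

theorem gradient_in_K_of_one_lipschitz_wrt_finslerDist {n : ℕ}
    (Ω : Set (EuclideanSpace ℝ (Fin n)))
    (hΩo : IsOpen Ω) (hΩb : Bornology.IsBounded Ω) (hΩc : IsConnected Ω)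
    (K : EuclideanSpace ℝ (Fin n) → Set (EuclideanSpace ℝ (Fin n)))
    (α M : ℝ) (hα : 0 < α) (hM : 0 < M)
    (hKcomp : ∀ x ∈ closure Ω, IsCompact (K x))
    (hKconv : ∀ x ∈ closure Ω, Convex ℝ (K x))
    (hKin : ∀ x ∈ closure Ω, Metric.closedBall (0 : EuclideanSpace ℝ (Fin n)) α ⊆ K x)
    (hKout : ∀ x ∈ closure Ω, K x ⊆ Metric.closedBall (0 : EuclideanSpace ℝ (Fin n)) M)
    (hKcont : ∀ x ∈ closure Ω, Tendsto (fun y => Metric.hausdorffDist (K y) (K x))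
      (nhdsWithin x (closure Ω)) (nhds 0))
    (u : EuclideanSpace ℝ (Fin n) → ℝ) (hu : ContinuousOn u Ω)
    (hlip : ∀ x ∈ Ω, ∀ y ∈ Ω, u y - u x ≤ finslerDist Ω (suppFn K) x y) :
    (∀ x ∈ Ω, ∃ ε > 0, ∃ C : NNReal, LipschitzOnWith C u (Metric.ball x ε)) ∧
    (∀ᵐ x ∂(volume : Measure (EuclideanSpace ℝ (Fin n))), x ∈ Ω →
      DifferentiableAt ℝ u x ∧ gradient u x ∈ K x) :=
  gradient_in_K_of_one_lipschitz_wrt_finslerDist_general Ω hΩo K α M hα hKcomp hKconv hKin hKout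
    hKcont u hlip
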